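/- arXiv:math/0703429 — 3 statements merged into one kernel-verified Lean document; each statement's English description precedes it below -/
import Mathlib

section
/- Let ω₁ be the first uncountable ordinal with its order topology, let 1 ≤ n < ω, and give [ω₁]^n = {(α₁,…,α_n) ∈ ω₁^n : α₁ < ⋯ < α_n} the subspace topology from the product ω₁^n. If B is a Borel subset of [ω₁]^n, then either there is a club C ⊆ ω₁ with [C]^n ⊆ B, or there is a club C ⊆ ω₁ with [C]^n ∩ B = ∅. -/
open Set

noncomputable section

/-- The first uncountable ordinal. -/
def omega1 : Ordinal.{0} := (Cardinal.aleph 1).ord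

/-- `ω₁` as a linearly ordered set: the set of ordinals below `ω₁`. -/
abbrev Omega1 : Type 1 := ↥(Set.Iio omega1)

/-- The order topology on `ω₁`. -/
instance : TopologicalSpace Omega1 := Preorder.topology Omega1

instance : OrderTopology Omega1 := ⟨rfl⟩

/-- A club in `ω₁` : a subset closed in the order topology and unbounded. -/
def IsClubIn (C : Set Omega1) : Prop :=
  IsClosed C ∧ ∀ x : Omega1, ∃ y ∈ C, x ≤ y

/-! Open sets are handled by induction on `n`. For open `U ⊆ ω₁^(n+1)`, each section
`{w | (α, w) ∈ U}` is homogeneous on a club `C α`, and on the diagonal intersection `D` of these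
clubs an increasing tuple starting at `α` has its tail in `C α`. The `α ∈ D` whose section is
avoided form a closed set, because `U` is open in the first coordinate. Either this set is
bounded by some `β`, and every increasing tuple from `D` above `β` lies in `U`, or it is itself
a club, and no increasing tuple from it lies in `U`. Finally, the club-homogeneous sets form a
σ-algebra, since clubs are closed under countable intersections, so they include the Borel
sets. -/

theorem exists_seq_strictMono_mem_gt {α : Type*} [Preorder α] {D : Set α}
    (hD : ∀ x, ∃ y ∈ D, x < y) (a : α) :
    ∃ s : ℕ → α, StrictMono s ∧ (∀ k, s k ∈ D) ∧ ∀ k, a < s k := by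
  choose g hgD hg using hD
  have hsucc : ∀ k, g^[k + 1] a = g (g^[k] a) := fun k => Function.iterate_succ_apply' g k a
  have hmono : StrictMono fun k => g^[k + 1] a :=
    strictMono_nat_of_lt_succ fun k => by simp only [hsucc (k + 1)]; exact hg _
  refine ⟨fun k => g^[k + 1] a, hmono, fun k => ?_, fun k => ?_⟩
  · simp only [hsucc k]
    exact hgD _
  · exact (hg a).trans_le (hmono.monotone (Nat.zero_le k))

namespace Omega1

theorem isSuccLimit_omega1 : Order.IsSuccLimit omega1 :=
  Cardinal.isSuccLimit_ord (Cardinal.aleph0_le_aleph 1)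

def succ (x : Omega1) : Omega1 := ⟨Order.succ x.1, isSuccLimit_omega1.succ_lt x.2⟩

theorem lt_succ (x : Omega1) : x < succ x := Order.lt_succ x.1

theorem lt_succ_iff {x y : Omega1} : x < succ y ↔ x ≤ y := by
  change x.1 < Order.succ y.1 ↔ x.1 ≤ y.1
  exact Order.lt_succ_iff

theorem omega1_eq : omega1 = Ordinal.omega 1 := Cardinal.ord_aleph 1

theorem countable_Iic (γ : Omega1) : (Iic γ).Countable := by
  have h : (Iio γ.1).Countable := by
    rw [← Cardinal.le_aleph0_iff_set_countable, Cardinal.mk_Iio_ordinal,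
      ← Cardinal.lift_aleph0.{1, 0}, Cardinal.lift_le, ← Cardinal.lt_aleph_one_iff,
      ← Cardinal.lt_ord]
    exact γ.2
  rw [← Iio_insert]
  exact (h.preimage Subtype.val_injective).insert γ

theorem exists_isLUB_range {ι : Type*} [Countable ι] (f : ι → Omega1) :
    ∃ δ : Omega1, IsLUB (range f) δ := by
  have hlt : ⨆ i, (f i).1 < omega1 :=
    (Ordinal.iSup_lt_omega_one fun i => lt_of_lt_of_eq (f i).2 omega1_eq).trans_eq omega1_eq.symm
  refine ⟨⟨_, hlt⟩, ?_, fun c hc => ?_⟩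
  · rintro _ ⟨i, rfl⟩
    exact Ordinal.le_iSup (fun i => (f i).1) i
  · exact Ordinal.iSup_le fun i => hc ⟨i, rfl⟩

theorem exists_forall_gt {ι : Type*} [Countable ι] (f : ι → Omega1) :
    ∃ b : Omega1, ∀ i, f i < b := by
  obtain ⟨δ, hδ⟩ := exists_isLUB_range f
  exact ⟨succ δ, fun i => lt_succ_iff.2 (hδ.1 ⟨i, rfl⟩)⟩

end Omega1

open Omega1

theorem mem_of_forall_lt_exists_mem {C : Set Omega1} (hC : IsClosed C) {δ : Omega1}
    (hδ : ∃ α, α < δ) (h : ∀ α < δ, ∃ c ∈ C, α < c ∧ c < δ) : δ ∈ C := by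
  have hlub : IsLUB (C ∩ Iio δ) δ := by
    refine ⟨fun c hc => hc.2.le, fun b hb => not_lt.1 fun hbδ => ?_⟩
    obtain ⟨c, hcC, hbc, hcδ⟩ := h b hbδ
    exact (hb ⟨hcC, hcδ⟩).not_gt hbc
  obtain ⟨α, hα⟩ := hδ
  obtain ⟨c, hcC, -, hcδ⟩ := h α hα
  exact hC.closure_subset (closure_mono inter_subset_left (hlub.mem_closure ⟨c, hcC, hcδ⟩))

theorem IsClubIn.exists_gt {C : Set Omega1} (hC : IsClubIn C) (x : Omega1) :
    ∃ y ∈ C, x < y := by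
  obtain ⟨y, hyC, hy⟩ := hC.2 (succ x)
  exact ⟨y, hyC, (lt_succ x).trans_le hy⟩

theorem IsClubIn.inter_Ici {C : Set Omega1} (hC : IsClubIn C) (a : Omega1) :
    IsClubIn (C ∩ Ici a) := by
  refine ⟨hC.1.inter isClosed_Ici, fun x => ?_⟩
  obtain ⟨y, hyC, hy⟩ := hC.2 (max x a)
  exact ⟨y, ⟨hyC, le_of_max_le_right hy⟩, le_of_max_le_left hy⟩

theorem isClubIn_univ : IsClubIn univ := ⟨isClosed_univ, fun x => ⟨x, mem_univ x, le_rfl⟩⟩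

def closurePoints (F : Omega1 → Omega1) : Set Omega1 := {δ | ∀ α < δ, F α < δ}

theorem isClosed_closurePoints (F : Omega1 → Omega1) : IsClosed (closurePoints F) := by
  have h : closurePoints F = (⋃ α, Ioo α (succ (F α)))ᶜ := by
    ext δ
    simp [closurePoints, lt_succ_iff]
  rw [h]
  exact (isOpen_iUnion fun α => isOpen_Ioo).isClosed_compl

theorem isClubIn_closurePoints (F : Omega1 → Omega1) : IsClubIn (closurePoints F) := by
  refine ⟨isClosed_closurePoints F, fun x => ?_⟩
  have := fun y => (countable_Iic y).to_subtype
  choose G hG using fun y => exists_forall_gt fun a : Iic y => F a.1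
  obtain ⟨δ, hδ⟩ := exists_isLUB_range fun m : ℕ => G^[m] x
  refine ⟨δ, fun α hαδ => ?_, hδ.1 ⟨0, rfl⟩⟩
  obtain ⟨_, ⟨m, rfl⟩, hαm⟩ := (lt_isLUB_iff hδ).1 hαδ
  calc F α < G (G^[m] x) := hG _ ⟨α, hαm.le⟩
    _ = G^[m + 1] x := (Function.iterate_succ_apply' G m x).symm
    _ ≤ δ := hδ.1 ⟨m + 1, rfl⟩

theorem isClubIn_of_closurePoints_subset {C : Set Omega1} (hC : IsClosed C) (F : Omega1 → Omega1)
    (hF : ∀ δ ∈ closurePoints F, (∃ α, α < δ) → δ ∈ C) : IsClubIn C := by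
  refine ⟨hC, fun x => ?_⟩
  obtain ⟨δ, hδ, hxδ⟩ := (isClubIn_closurePoints F).exists_gt x
  exact ⟨δ, hF δ hδ ⟨x, hxδ⟩, hxδ.le⟩

theorem isClubIn_iInter {ι : Type*} [Countable ι] {C : ι → Set Omega1}
    (hC : ∀ i, IsClubIn (C i)) : IsClubIn (⋂ i, C i) := by
  choose g hgC hg using fun i x => (hC i).exists_gt x
  choose F hF using fun x => exists_forall_gt fun i => g i x
  refine isClubIn_of_closurePoints_subset (isClosed_iInter fun i => (hC i).1) F
    fun δ hδ hδpos => mem_iInter.2 fun i => ?_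
  exact mem_of_forall_lt_exists_mem (hC i).1 hδpos fun α hα =>
    ⟨g i α, hgC i α, hg i α, (hF α i).trans (hδ α hα)⟩

def diagInter (C : Omega1 → Set Omega1) : Set Omega1 := {δ | ∀ α < δ, δ ∈ C α}

theorem isClosed_diagInter {C : Omega1 → Set Omega1} (hC : ∀ α, IsClosed (C α)) :
    IsClosed (diagInter C) := by
  have h : diagInter C = ⋂ α, Iic α ∪ C α := by
    ext δ
    simp [diagInter, or_iff_not_imp_left]
  rw [h]
  exact isClosed_iInter fun α => isClosed_Iic.union (hC α)

theorem isClubIn_diagInter {C : Omega1 → Set Omega1} (hC : ∀ α, IsClubIn (C α)) :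
    IsClubIn (diagInter C) := by
  have := fun y => (countable_Iic y).to_subtype
  choose g hgC hg using fun α x => (hC α).exists_gt x
  choose F hF using fun x => exists_forall_gt fun a : Iic x => g a.1 x
  refine isClubIn_of_closurePoints_subset (isClosed_diagInter fun α => (hC α).1) F
    fun δ hδ _ α hαδ => ?_
  refine mem_of_forall_lt_exists_mem (hC α).1 ⟨α, hαδ⟩ fun β hβδ => ?_
  exact ⟨g α (max α β), hgC α _, (le_max_right α β).trans_lt (hg α _),
    (hF _ ⟨α, le_max_left α β⟩).trans (hδ _ (max_lt hαδ hβδ))⟩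

def increasingTuples (n : ℕ) (C : Set Omega1) : Set {v : Fin n → Omega1 // StrictMono v} :=
  {v | ∀ i, v.1 i ∈ C}

theorem IsClubIn.exists_mem_increasingTuples_gt {D : Set Omega1} (hD : IsClubIn D) (n : ℕ)
    (δ : Omega1) : ∃ w ∈ increasingTuples n D, ∀ i, δ < w.1 i := by
  obtain ⟨s, hs, hsD, hδs⟩ := exists_seq_strictMono_mem_gt hD.exists_gt δ
  exact ⟨⟨fun i => s i, hs.comp Fin.val_strictMono⟩, fun i => hsD i, fun i => hδs i⟩

theorem mem_of_tail_mem {m : ℕ} {C : Omega1 → Set Omega1} {T : Set (Fin (m + 1) → Omega1)}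
    {v : {v : Fin (m + 1) → Omega1 // StrictMono v}}
    (hv : v ∈ increasingTuples (m + 1) (diagInter C))
    (hT : increasingTuples m (C (v.1 0)) ⊆ Subtype.val ⁻¹' {w | Fin.cons (v.1 0) w ∈ T}) :
    v.1 ∈ T := by
  have h : Fin.cons (v.1 0) (Fin.tail v.1) ∈ T :=
    hT (a := ⟨Fin.tail v.1, v.2.comp Fin.strictMono_succ⟩)
      fun i => hv i.succ _ (v.2 (Fin.succ_pos i))
  rwa [Fin.cons_self_tail] at h

def IsClubHomogeneous {n : ℕ} (S : Set {v : Fin n → Omega1 // StrictMono v}) : Prop :=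
  ∃ C, IsClubIn C ∧ (increasingTuples n C ⊆ S ∨ increasingTuples n C ⊆ Sᶜ)

theorem isClubHomogeneous_preimage_of_sections {m : ℕ} {U : Set (Fin (m + 1) → Omega1)}
    (hU : IsOpen U)
    (hsec : ∀ α, IsClubHomogeneous (Subtype.val ⁻¹' {w | Fin.cons α w ∈ U} :
      Set {v : Fin m → Omega1 // StrictMono v})) :
    IsClubHomogeneous
      (Subtype.val ⁻¹' U : Set {v : Fin (m + 1) → Omega1 // StrictMono v}) := by
  choose C hC hCU using hsec
  set D := diagInter C
  have hD : IsClubIn D := isClubIn_diagInter hC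
  set good := {α | increasingTuples m (C α) ⊆ Subtype.val ⁻¹' {w | Fin.cons α w ∈ U}}
  have hbad (α) (hα : α ∉ good) :
      increasingTuples m (C α) ⊆ (Subtype.val ⁻¹' {w | Fin.cons α w ∈ U})ᶜ :=
    (hCU α).resolve_left hα
  have hclosed : IsClosed (D \ good) := by
    refine isClosed_of_closure_subset fun δ hδ => ?_
    refine ⟨hD.1.closure_subset (closure_mono sdiff_subset hδ), fun hδgood => ?_⟩
    obtain ⟨w, hwD, hδw⟩ := hD.exists_mem_increasingTuples_gt m δ
    -- `Fin.cons δ w ∈ U`, and `U` is open, so `Fin.cons α w ∈ U` for the bad `α` near `δ`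
    have hN : IsOpen ({t | Fin.cons t w.1 ∈ U} ∩ ⋂ i, Iio (w.1 i)) :=
      (hU.preimage (continuous_id.finCons continuous_const)).inter
        (isOpen_iInter_of_finite fun i => isOpen_Iio)
    obtain ⟨α, ⟨hαU, hαw⟩, -, hαgood⟩ := mem_closure_iff.1 hδ _ hN
      ⟨hδgood (fun i => hwD i δ (hδw i)), mem_iInter.2 hδw⟩
    exact hbad α hαgood (fun i => hwD i α (mem_iInter.1 hαw i)) hαU
  by_cases hbd : BddAbove (D \ good)
  · obtain ⟨β, hβ⟩ := hbd
    refine ⟨D ∩ Ici (succ β), hD.inter_Ici _, Or.inl fun v hv => ?_⟩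
    have hv0 : v.1 0 ∈ good := by
      by_contra h
      exact (hβ ⟨(hv 0).1, h⟩).not_gt ((lt_succ β).trans_le (hv 0).2)
    exact mem_of_tail_mem (fun i => (hv i).1) hv0
  · refine ⟨D \ good, ⟨hclosed, fun x => ?_⟩, Or.inr fun v hv => ?_⟩
    · obtain ⟨y, hy, hxy⟩ := not_bddAbove_iff.1 hbd x
      exact ⟨y, hy, hxy.le⟩
    · exact mem_of_tail_mem (T := Uᶜ) (fun i => (hv i).1) (hbad _ (hv 0).2)

theorem isClubHomogeneous_preimage_of_isOpen :
    ∀ {n : ℕ} {U : Set (Fin n → Omega1)}, IsOpen U →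
      IsClubHomogeneous (Subtype.val ⁻¹' U : Set {v : Fin n → Omega1 // StrictMono v})
  | 0, U, _ => by
    refine ⟨univ, isClubIn_univ, ?_⟩
    by_cases h : default ∈ U
    · exact Or.inl fun v _ => by rwa [mem_preimage, Subsingleton.elim v.1 default]
    · exact Or.inr fun v _ => by rwa [mem_compl_iff, mem_preimage, Subsingleton.elim v.1 default]
  | _ + 1, _, hU => isClubHomogeneous_preimage_of_sections hU fun _ =>
    isClubHomogeneous_preimage_of_isOpen (hU.preimage (continuous_const.finCons continuous_id))

abbrev clubHomogeneousSets (n : ℕ) : MeasurableSpace {v : Fin n → Omega1 // StrictMono v} where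
  MeasurableSet' := IsClubHomogeneous
  measurableSet_empty := ⟨univ, isClubIn_univ, Or.inr fun _ _ h => h⟩
  measurableSet_compl S := by
    rintro ⟨C, hC, h⟩
    exact ⟨C, hC, by rwa [compl_compl, or_comm]⟩
  measurableSet_iUnion S hS := by
    by_cases h : ∃ k C, IsClubIn C ∧ increasingTuples n C ⊆ S k
    · obtain ⟨k, C, hC, hk⟩ := h
      exact ⟨C, hC, Or.inl (hk.trans (subset_iUnion S k))⟩
    · simp only [not_exists, not_and] at h
      choose C hC hCS using hS
      refine ⟨⋂ k, C k, isClubIn_iInter hC, Or.inr fun v hv hvS => ?_⟩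
      obtain ⟨k, hk⟩ := mem_iUnion.1 hvS
      have hvk : v ∈ increasingTuples n (C k) := fun i => mem_iInter.1 (hv i) k
      exact ((hCS k).resolve_left (h k _ (hC k))) hvk hk

theorem borel_le_clubHomogeneousSets (n : ℕ) :
    borel {v : Fin n → Omega1 // StrictMono v} ≤ clubHomogeneousSets n := by
  refine MeasurableSpace.generateFrom_le fun U hU => ?_
  obtain ⟨V, hV, rfl⟩ := isOpen_induced_iff.1 hU
  exact isClubHomogeneous_preimage_of_isOpen hV

theorem stmt15_general (n : ℕ)
    (B : Set {v : Fin n → Omega1 // StrictMono v})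
    (hB : @MeasurableSet _ (borel {v : Fin n → Omega1 // StrictMono v}) B) :
    (∃ C : Set Omega1, IsClubIn C ∧
      ∀ v : {v : Fin n → Omega1 // StrictMono v}, (∀ i, v.1 i ∈ C) → v ∈ B) ∨
    (∃ C : Set Omega1, IsClubIn C ∧
      ∀ v : {v : Fin n → Omega1 // StrictMono v}, (∀ i, v.1 i ∈ C) → v ∉ B) := by
  obtain ⟨C, hC, hB | hB⟩ := borel_le_clubHomogeneousSets n B hB
  exacts [Or.inl ⟨C, hC, hB⟩, Or.inr ⟨C, hC, hB⟩]

/-- If `B` is a Borel subset of `[ω₁]^n` (the space of strictly increasing `n`-tuples from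
`ω₁`, with the subspace topology from the product), then there is a club `C ⊆ ω₁` with
`[C]^n ⊆ B`, or there is a club `C ⊆ ω₁` with `[C]^n ∩ B = ∅`. -/
theorem stmt15 (n : ℕ) (hn : 1 ≤ n)
    (B : Set {v : Fin n → Omega1 // StrictMono v})
    (hB : @MeasurableSet _ (borel {v : Fin n → Omega1 // StrictMono v}) B) :
    (∃ C : Set Omega1, IsClubIn C ∧
      ∀ v : {v : Fin n → Omega1 // StrictMono v}, (∀ i, v.1 i ∈ C) → v ∈ B) ∨
    (∃ C : Set Omega1, IsClubIn C ∧
      ∀ v : {v : Fin n → Omega1 // StrictMono v}, (∀ i, v.1 i ∈ C) → v ∉ B) :=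
  stmt15_general n B hB
end
end

section
/- Let L be a compact LOTS, let X be a compact Hausdorff space, let ω₁ + 1 be the set of ordinals ≤ ω₁ with its order topology, and let g : X × (ω₁ + 1) → L be continuous. Suppose that g(x,ξ) < g(x,η) for every x ∈ X and all ordinals ξ < η < ω₁. Then the set {g(x, ω₁) : x ∈ X} is finite. -/
open Set

noncomputable section

/-- `ω₁ + 1` as a linearly ordered set: the set of ordinals `≤ ω₁`. -/
abbrev Omega1Succ : Type 1 := ↥(Set.Iic omega1)

/-- The order topology on `ω₁ + 1`. -/
instance : TopologicalSpace Omega1Succ := Preorder.topology Omega1Succ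

instance : OrderTopology Omega1Succ := ⟨rfl⟩

/-- The top point `ω₁` of `ω₁ + 1`. -/
def w1top : Omega1Succ := ⟨omega1, Set.mem_Iic.mpr le_rfl⟩

open Filter Topology

/-! Write `G x = g (x, ω₁)`. Each fibre `g (x, ·)` increases to `G x`, and since `ω₁` has
uncountable cofinality, countably many strict lower bounds `a n < g (u n, ω₁)` are all beaten at
one countable stage `ζ`. If the range of `G` were infinite, it would contain a strictly monotone
sequence `G (u n)`; let `x` be a cluster point of `u`, so `G x` is a cluster point of `G (u n)`.
If the sequence increases, it lies below `G x`, hence below some `g (x, ζ) < G x`, which keeps it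
away from `G x`. If it decreases, it lies above `G x`, hence `G x < g (u n, ζ)` for all `n` and one
`ζ`, contradicting continuity of `g (·, ζ)` at `x`, where `g (x, ζ) < G x`. -/

section OrderTopology

variable {α β : Type*} [LinearOrder α] [TopologicalSpace α] [OrderTopology α]
  [LinearOrder β] [TopologicalSpace β] [OrderTopology β]

theorem StrictMonoOn.lt_of_continuousWithinAt_Iio {f : α → β} {a b : α} [(𝓝[<] b).NeBot]
    (hf : StrictMonoOn f (Iio b)) (hcont : ContinuousWithinAt f (Iio b) b) (hab : a < b) :
    f a < f b := by
  obtain ⟨c, hac, hcb⟩ := Filter.nonempty_of_mem (Ioo_mem_nhdsLT hab)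
  refine (hf hab hcb hac).trans_le (ge_of_tendsto hcont ?_)
  filter_upwards [Ioo_mem_nhdsLT hcb] with d hd
  exact (hf hcb hd.2 hd.1).le

theorem StrictMono.lt_of_mapClusterPt {ι : Type*} [Preorder ι] [NoMaxOrder ι] {t : ι → α}
    (ht : StrictMono t) {l : α} (hl : MapClusterPt l atTop t) (i : ι) : t i < l := by
  by_contra! h
  obtain ⟨j, hij⟩ := exists_gt i
  obtain ⟨k, hk, hjk⟩ := ((hl.frequently (Iio_mem_nhds (h.trans_lt (ht hij)))).and_eventually
    (eventually_gt_atTop j)).exists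
  exact (ht hjk).not_gt hk

theorem StrictAnti.lt_of_mapClusterPt {ι : Type*} [Preorder ι] [NoMaxOrder ι] {t : ι → α}
    (ht : StrictAnti t) {l : α} (hl : MapClusterPt l atTop t) (i : ι) : l < t i :=
  StrictMono.lt_of_mapClusterPt (α := αᵒᵈ) ht.dual_right hl i

end OrderTopology

theorem Set.Infinite.exists_strictMono_or_strictAnti_comp {X L : Type*} [LinearOrder L]
    {f : X → L} (h : (range f).Infinite) :
    ∃ u : ℕ → X, StrictMono (f ∘ u) ∨ StrictAnti (f ∘ u) := by
  have := h.to_subtype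
  obtain ⟨s, hs⟩ := Infinite.exists_strictMono_or_strictAnti (range f)
  choose u hu using fun n => (s n).2
  have hfu : f ∘ u = Subtype.val ∘ s := funext hu
  exact ⟨u, hfu ▸ hs.imp (Subtype.strictMono_coe _).comp
    (Subtype.strictMono_coe _).comp_strictAnti⟩

theorem omega1_isSuccLimit : Order.IsSuccLimit omega1 :=
  Cardinal.isSuccLimit_ord (Cardinal.aleph0_le_aleph 1)

instance : (𝓝[<] w1top).NeBot := by
  refine forall_mem_nonempty_iff_neBot.mp fun s hs => ?_
  have hbot : (⊥ : Omega1Succ) < w1top := omega1_isSuccLimit.bot_lt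
  obtain ⟨ξ, hξ, hsub⟩ := (mem_nhdsLT_iff_exists_Ioo_subset' hbot).mp hs
  have hsucc : Order.succ ξ.1 < omega1 := omega1_isSuccLimit.succ_lt hξ
  exact ⟨⟨_, hsucc.le⟩, hsub ⟨Order.lt_succ ξ.1, hsucc⟩⟩

theorem iSup_lt_omega1 {ι : Type} [Countable ι] {o : ι → Ordinal.{0}}
    (h : ∀ i, o i < omega1) : ⨆ i, o i < omega1 := by
  rw [omega1, Cardinal.ord_aleph] at *
  exact Ordinal.iSup_lt_omega_one h

theorem exists_le_lt_w1top {ι : Type} [Countable ι] (f : ι → Omega1Succ)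
    (hf : ∀ i, f i < w1top) : ∃ ζ < w1top, ∀ i, f i ≤ ζ :=
  ⟨⟨_, (iSup_lt_omega1 hf).le⟩, iSup_lt_omega1 hf,
    fun i => le_ciSup Ordinal.bddAbove_of_small i⟩

theorem exists_lt_apply_of_lt_apply_w1top {ι : Type} [Countable ι] {L : Type*} [LinearOrder L]
    [TopologicalSpace L] [OrderTopology L] {f : ι → Omega1Succ → L}
    (hmono : ∀ i, StrictMonoOn (f i) (Iio w1top))
    (hcont : ∀ i, ContinuousWithinAt (f i) (Iio w1top) w1top)
    {a : ι → L} (ha : ∀ i, a i < f i w1top) : ∃ ζ < w1top, ∀ i, a i < f i ζ := by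
  have hstage (i : ι) : ∃ ζ < w1top, a i < f i ζ :=
    (((hcont i).eventually (Ioi_mem_nhds (ha i))).and self_mem_nhdsWithin).exists.imp
      fun _ h => ⟨h.2, h.1⟩
  choose ζ hζ hlt using hstage
  obtain ⟨ζ', hζ', hle⟩ := exists_le_lt_w1top ζ hζ
  exact ⟨ζ', hζ', fun i => (hlt i).trans_le ((hmono i).monotoneOn (hζ i) hζ' (hle i))⟩

theorem stmt17_general {X : Type*} [TopologicalSpace X] [CompactSpace X]
    {L : Type*} [LinearOrder L] [TopologicalSpace L] [OrderTopology L]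
    (g : X × Omega1Succ → L) (hg : Continuous g)
    (hmono : ∀ (x : X) (ξ η : Omega1Succ), ξ < η → η < w1top → g (x, ξ) < g (x, η)) :
    {l : L | ∃ x : X, g (x, w1top) = l}.Finite := by
  have hmono' (x : X) : StrictMonoOn (fun ξ => g (x, ξ)) (Iio w1top) :=
    fun ξ _ η hη hξη => hmono x ξ η hξη hη
  have hcont (x : X) : ContinuousWithinAt (fun ξ => g (x, ξ)) (Iio w1top) w1top :=
    (hg.comp (Continuous.prodMk_right x)).continuousWithinAt
  by_contra hinf
  obtain ⟨u, hu⟩ :=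
    Set.Infinite.exists_strictMono_or_strictAnti_comp (f := fun x => g (x, w1top)) hinf
  obtain ⟨x, -, hx⟩ := isCompact_univ.exists_mapClusterPt (f := atTop) (u := u) (by simp)
  have hl : MapClusterPt (g (x, w1top)) atTop fun n => g (u n, w1top) :=
    hx.continuousAt_comp (f := fun y => g (y, w1top))
      (hg.comp (Continuous.prodMk_left w1top)).continuousAt
  rcases hu with hinc | hdec
  · obtain ⟨ζ, hζ, hlt⟩ := exists_lt_apply_of_lt_apply_w1top
      (f := fun (_ : ℕ) ξ => g (x, ξ)) (fun _ => hmono' x) (fun _ => hcont x)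
      (hinc.lt_of_mapClusterPt hl)
    obtain ⟨n, hn⟩ := (hl.frequently
      (Ioi_mem_nhds ((hmono' x).lt_of_continuousWithinAt_Iio (hcont x) hζ))).exists
    exact (hlt n).not_gt hn
  · obtain ⟨ζ, hζ, hlt⟩ := exists_lt_apply_of_lt_apply_w1top
      (f := fun n ξ => g (u n, ξ)) (fun n => hmono' (u n)) (fun n => hcont (u n))
      (hdec.lt_of_mapClusterPt hl)
    have hnear : ∀ᶠ y in 𝓝 x, g (y, ζ) < g (x, w1top) :=
      (hg.comp (Continuous.prodMk_left ζ)).continuousAt.eventually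
        (Iio_mem_nhds ((hmono' x).lt_of_continuousWithinAt_Iio (hcont x) hζ))
    obtain ⟨n, hn⟩ := (hx.frequently hnear).exists
    exact (hlt n).not_gt hn

/-- If `L` is a compact LOTS, `X` is compact Hausdorff, `g : X × (ω₁ + 1) → L` is
continuous, and `g (x, ξ) < g (x, η)` whenever `ξ < η < ω₁`, then
`{g (x, ω₁) : x ∈ X}` is finite. -/
theorem stmt17 {X : Type*} [TopologicalSpace X] [CompactSpace X] [T2Space X]
    {L : Type*} [LinearOrder L] [TopologicalSpace L] [OrderTopology L] [CompactSpace L]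
    (g : X × Omega1Succ → L) (hg : Continuous g)
    (hmono : ∀ (x : X) (ξ η : Omega1Succ), ξ < η → η < w1top → g (x, ξ) < g (x, η)) :
    {l : L | ∃ x : X, g (x, w1top) = l}.Finite :=
  stmt17_general g hg hmono

end
end

section
/- Let X, Y be compact Hausdorff spaces, let f : X → Y be a tight continuous map, let μ be a Radon measure on X, and let ν = μ ∘ f⁻¹ be the pushforward measure on Y (ν(B) = μ(f⁻¹(B))). Suppose ν is atomless. Then X is skinny with respect to f and μ; that is, μ(K) = ν(f(K)) for every closed K ⊆ X. -/
open Set Topology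

universe u

section Defs

variable {X Y K Z : Type*}

/-- A subset `S` of a topological space is *scattered* iff every nonempty subset `T ⊆ S`
has a point which is isolated in the subspace topology of `T`. -/
def IsScatteredSet [TopologicalSpace X] (S : Set X) : Prop :=
  ∀ T ⊆ S, T.Nonempty → ∃ x ∈ T, ∃ U : Set X, IsOpen U ∧ U ∩ T = {x}

/-- A *loose family* for `f : X → Y` : a pairwise disjoint family `Ps` of closed subsets of `X`
such that for some non-scattered `Q ⊆ Y`, `f '' P = Q` for all `P ∈ Ps`. -/
def LooseFamily [TopologicalSpace X] [TopologicalSpace Y] (f : X → Y)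
    (Ps : Set (Set X)) : Prop :=
  Ps.Pairwise Disjoint ∧ (∀ P ∈ Ps, IsClosed P) ∧
    ∃ Q : Set Y, ¬ IsScatteredSet Q ∧ ∀ P ∈ Ps, f '' P = Q

/-- `f` is `κ`-*tight* iff there is no loose family for `f` of cardinality `κ`. -/
def IsTightCard [TopologicalSpace X] [TopologicalSpace Y] (κ : Cardinal) (f : X → Y) : Prop :=
  ¬ ∃ Ps : Set (Set X), LooseFamily f Ps ∧ Cardinal.mk Ps = κ

/-- `f` is *tight* iff it is `2`-tight. -/
def IsTight [TopologicalSpace X] [TopologicalSpace Y] (f : X → Y) : Prop :=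
  IsTightCard 2 f

/-- A `K`-*loose function* for `f : X → Y` : a continuous `φ : D → K` with `D` closed in `X`,
such that for some non-scattered `Q ⊆ Y`, `φ(f⁻¹{y} ∩ D) = K` for all `y ∈ Q`. -/
def LooseFunction [TopologicalSpace X] [TopologicalSpace Y] [TopologicalSpace K]
    (f : X → Y) (D : Set X) (φ : X → K) : Prop :=
  IsClosed D ∧ ContinuousOn φ D ∧
    ∃ Q : Set Y, ¬ IsScatteredSet Q ∧ ∀ y ∈ Q, φ '' (f ⁻¹' {y} ∩ D) = Set.univ

/-- `f` is *weakly c-tight* iff there is no `K`-loose function for `f`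
with `K` the Cantor space `2^ω`. -/
def WeaklyCTight [TopologicalSpace X] [TopologicalSpace Y] (f : X → Y) : Prop :=
  ¬ ∃ (D : Set X) (φ : X → (ℕ → Bool)), LooseFunction f D φ

/-- `f` is *finer* than `g` iff `f x₁ = f x₂` implies `g x₁ = g x₂`. -/
def Finer (f : X → Y) (g : X → Z) : Prop :=
  ∀ x₁ x₂ : X, f x₁ = f x₂ → g x₁ = g x₂

end Defs

/-- `X` is `κ`-*dissipated* iff every continuous map from `X` to a compact metrizable
space is refined by a `κ`-tight continuous map from `X` to a compact metrizable space. -/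
def IsDissipatedCard (κ : Cardinal.{u}) (X : Type u) [TopologicalSpace X] : Prop :=
  ∀ (Z : Type u) [TopologicalSpace Z] [CompactSpace Z] [TopologicalSpace.MetrizableSpace Z],
    ∀ g : X → Z, Continuous g →
      ∃ (Y : Type u) (tY : TopologicalSpace Y),
        @CompactSpace Y tY ∧ @TopologicalSpace.MetrizableSpace Y tY ∧
        ∃ f : X → Y, @Continuous X Y _ tY f ∧ @IsTightCard X Y _ tY κ f ∧ Finer f g

/-- `X` is *weakly c-dissipated* iff every continuous map from `X` to a compact metrizable
space is refined by a weakly c-tight continuous map from `X` to a compact metrizable space. -/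
def IsWeaklyCDissipated (X : Type u) [TopologicalSpace X] : Prop :=
  ∀ (Z : Type u) [TopologicalSpace Z] [CompactSpace Z] [TopologicalSpace.MetrizableSpace Z],
    ∀ g : X → Z, Continuous g →
      ∃ (Y : Type u) (tY : TopologicalSpace Y),
        @CompactSpace Y tY ∧ @TopologicalSpace.MetrizableSpace Y tY ∧
        ∃ f : X → Y, @Continuous X Y _ tY f ∧ @WeaklyCTight X Y _ tY f ∧ Finer f g

open MeasureTheory

/-!
An atomless Radon measure vanishes on scattered sets: restricted to a scattered set `S`, it
is carried by its support, and a point of `S` isolated in `S ∩ support` would have a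
neighbourhood of measure at most that of a point. So if `μ (f⁻¹(f K) \ K) > 0` for a closed
`K`, a compact `C ⊆ f⁻¹(f K) \ K` of positive measure has a non-scattered image, and `C`
together with `K ∩ f⁻¹(f C)` is a loose family of two sets, contradicting tightness.
-/

section Scattered

variable {X : Type*} [TopologicalSpace X]

lemma isScatteredSet_empty : IsScatteredSet (∅ : Set X) :=
  fun _ hT hne ↦ absurd (hne.mono hT) not_nonempty_empty

variable [MeasurableSpace X] [OpensMeasurableSpace X]

theorem IsScatteredSet.measure_eq_zero {ν : Measure X} [IsFiniteMeasure ν]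
    [ν.InnerRegularCompactLTTop] [NullSingletonClass ν] {S : Set X} (hS : IsScatteredSet S) :
    ν S = 0 := by
  set ρ := ν.restrict S
  have hρ_compl : ν (ρ.supportᶜ ∩ S) = 0 := by
    rw [← Measure.restrict_apply Measure.isOpen_compl_support.measurableSet]
    exact Measure.measure_compl_support_of_innerRegular
  by_contra hpos
  have hne : (S ∩ ρ.support).Nonempty := by
    refine nonempty_iff_ne_empty.mpr fun hempty ↦ hpos (measure_mono_null ?_ hρ_compl)
    exact subset_inter (disjoint_iff_inter_eq_empty.mpr hempty).subset_compl_right subset_rfl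
  obtain ⟨y, hy, U, hU, hUy⟩ := hS _ inter_subset_left hne
  have hyU : y ∈ U := (hUy.symm ▸ mem_singleton y : y ∈ U ∩ (S ∩ ρ.support)).1
  have hUS : U ∩ S ⊆ {y} ∪ ρ.supportᶜ ∩ S := by
    rintro z ⟨hzU, hzS⟩
    by_cases hz : z ∈ ρ.support
    · exact Or.inl (hUy ▸ ⟨hzU, hzS, hz⟩)
    · exact Or.inr ⟨hz, hzS⟩
  have hρU : 0 < ν (U ∩ S) := by
    rw [← Measure.restrict_apply hU.measurableSet]
    exact (Measure.mem_support_iff_forall y).mp hy.2 U (hU.mem_nhds hyU)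
  exact hρU.ne' (measure_mono_null hUS (measure_union_null (measure_singleton y) hρ_compl))

end Scattered

lemma MeasureTheory.NullSingletonClass.of_forall_exists_lt {Y : Type*} [MeasurableSpace Y]
    [MeasurableSingletonClass Y] {ν : Measure Y}
    (h : ∀ A : Set Y, MeasurableSet A → 0 < ν A →
      ∃ B ⊆ A, MeasurableSet B ∧ 0 < ν B ∧ ν B < ν A) :
    NullSingletonClass ν := by
  refine ⟨fun y ↦ ?_⟩
  by_contra hy
  obtain ⟨B, hBy, -, hB, hBlt⟩ := h {y} (measurableSet_singleton y) (pos_iff_ne_zero.mpr hy)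
  rcases subset_singleton_iff_eq.mp hBy with rfl | rfl
  · exact (measure_empty (μ := ν) ▸ hB).false
  · exact hBlt.false

section Tight

variable {X Y : Type*} [TopologicalSpace X] [TopologicalSpace Y] {f : X → Y}

lemma IsTight.isScatteredSet_image_of_disjoint (hf : IsTight f) {P₁ P₂ : Set X}
    (h₁ : IsClosed P₁) (h₂ : IsClosed P₂) (hd : Disjoint P₁ P₂) (himg : f '' P₁ = f '' P₂) :
    IsScatteredSet (f '' P₁) := by
  by_contra hQ
  have hne : P₁ ≠ P₂ := by
    rintro rfl
    rw [disjoint_self.mp hd, bot_eq_empty, image_empty] at hQ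
    exact hQ isScatteredSet_empty
  refine hf ⟨{P₁, P₂}, ⟨pairwise_pair_of_symm.mpr fun _ ↦ hd, ?_, f '' P₁, hQ, ?_⟩, ?_⟩
  · rintro P (rfl | rfl) <;> assumption
  · rintro P (rfl | rfl) <;> [rfl; exact himg.symm]
  · rw [Cardinal.mk_insert (by simpa using hne), Cardinal.mk_singleton, one_add_one_eq_two]

lemma IsTight.isScatteredSet_image_of_image_subset (hf : IsTight f) (hfc : Continuous f)
    {K C : Set X} (hK : IsClosed K) (hC : IsClosed C) (hfC : IsClosed (f '' C))
    (hd : Disjoint K C) (hCK : f '' C ⊆ f '' K) : IsScatteredSet (f '' C) := by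
  have himg : f '' (K ∩ f ⁻¹' (f '' C)) = f '' C := by
    rw [image_inter_preimage, inter_eq_right.mpr hCK]
  rw [← himg]
  exact hf.isScatteredSet_image_of_disjoint (hK.inter (hfC.preimage hfc)) hC
    (hd.mono_left inter_subset_left) himg

variable [T2Space X] [T2Space Y] [MeasurableSpace X] [BorelSpace X] [MeasurableSpace Y]
  [BorelSpace Y]

theorem IsTight.measure_preimage_image_diff_eq_zero (hf : IsTight f) (hfc : Continuous f)
    (μ : Measure X) [IsFiniteMeasure μ] [μ.InnerRegularCompactLTTop]
    [NullSingletonClass (μ.map f)] {K : Set X} (hK : IsCompact K) :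
    μ (f ⁻¹' (f '' K) \ K) = 0 := by
  have := Measure.InnerRegularCompactLTTop.map_of_continuous (μ := μ) hfc
  by_contra h
  have hm : MeasurableSet (f ⁻¹' (f '' K) \ K) :=
    (hfc.measurable (hK.image hfc).isClosed.measurableSet).diff hK.isClosed.measurableSet
  obtain ⟨C, hCsub, hC, hCpos⟩ := hm.exists_lt_isCompact (pos_iff_ne_zero.mpr h)
  have hscat : IsScatteredSet (f '' C) :=
    hf.isScatteredSet_image_of_image_subset hfc hK.isClosed hC.isClosed (hC.image hfc).isClosed
      (disjoint_sdiff_left.mono_left hCsub).symm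
      ((image_mono (hCsub.trans sdiff_subset)).trans (image_preimage_subset _ _))
  have hnull := hscat.measure_eq_zero (ν := μ.map f)
  rw [Measure.map_apply hfc.measurable (hC.image hfc).isClosed.measurableSet] at hnull
  exact hCpos.ne' (measure_mono_null (subset_preimage_image f C) hnull)

end Tight

theorem stmt19_general {X Y : Type u}
    [TopologicalSpace X] [CompactSpace X] [T2Space X]
    [MeasurableSpace X] [BorelSpace X]
    [TopologicalSpace Y] [T2Space Y]
    [MeasurableSpace Y] [BorelSpace Y]
    (f : X → Y) (hf : Continuous f) (htight : IsTight f)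
    (μ : Measure X) [IsFiniteMeasure μ] [μ.Regular]
    (hatomless : ∀ A : Set Y, MeasurableSet A → 0 < μ.map f A →
      ∃ B ⊆ A, MeasurableSet B ∧ 0 < μ.map f B ∧ μ.map f B < μ.map f A) :
    ∀ K : Set X, IsClosed K → μ K = μ.map f (f '' K) := by
  have := NullSingletonClass.of_forall_exists_lt hatomless
  intro K hK
  rw [Measure.map_apply hf.measurable (hK.isCompact.image hf).isClosed.measurableSet]
  exact le_antisymm (measure_mono (subset_preimage_image f K)) <| measure_mono_ae <|
    ae_le_set.mpr (htight.measure_preimage_image_diff_eq_zero hf μ hK.isCompact)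

/-- If `f : X → Y` is a tight continuous map of compact Hausdorff spaces, `μ` is a Radon
measure on `X`, and the pushforward `ν = μ ∘ f⁻¹` is atomless, then `X` is skinny with
respect to `f` and `μ` : `μ K = ν (f '' K)` for every closed `K ⊆ X`. -/
theorem stmt19 {X Y : Type u}
    [TopologicalSpace X] [CompactSpace X] [T2Space X]
    [MeasurableSpace X] [BorelSpace X]
    [TopologicalSpace Y] [CompactSpace Y] [T2Space Y]
    [MeasurableSpace Y] [BorelSpace Y]
    (f : X → Y) (hf : Continuous f) (htight : IsTight f)
    (μ : Measure X) [IsFiniteMeasure μ] [μ.Regular]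
    (hatomless : ∀ A : Set Y, MeasurableSet A → 0 < μ.map f A →
      ∃ B ⊆ A, MeasurableSet B ∧ 0 < μ.map f B ∧ μ.map f B < μ.map f A) :
    ∀ K : Set X, IsClosed K → μ K = μ.map f (f '' K) :=
  stmt19_general f hf htight μ hatomless
end
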